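/- With R(x) = C(x+7,7), the alternating sum R(x) − (6·R(x−3) + 3·R(x−2)) + (12·R(x−4) + 2·R(x−3) + 2·R(x−5)) − (3·R(x−6) + 6·R(x−5)) + R(x−8) equals (17/6)x^3 + (31/6)x for all x. -/
import Mathlib


/-- Hilbert polynomial of O(x) on P^7 as a rational polynomial: C(x+7,7). -/
noncomputable def R7 (x : ℚ) : ℚ :=
  (x+7)*(x+6)*(x+5)*(x+4)*(x+3)*(x+2)*(x+1) / (Nat.factorial 7 : ℚ)

/-- Alternating sum of the Gulliksen–Negård resolution on P^7 for E = O^3,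
F = O(1)^2 ⊕ O(2) gives Hilbert polynomial (17/6)x^3 + (31/6)x. -/
theorem resolution_hilbert_deg17_CY3 (x : ℚ) :
    R7 x - (6 * R7 (x-3) + 3 * R7 (x-2)) + (12 * R7 (x-4) + 2 * R7 (x-3) + 2 * R7 (x-5))
      - (3 * R7 (x-6) + 6 * R7 (x-5)) + R7 (x-8)
      = (17/6) * x^3 + (31/6) * x := by
  unfold R7
  simp [Nat.factorial]
  ring
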